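/- arXiv:2007.05453 — 5 statements merged into one kernel-verified Lean document; each statement's English description precedes it below -/
import Mathlib

section
/- Let X be a finite data domain, n ≥ 1, and D ∈ X^n. Let Q be a finite class of queries q : X → [0,1] that is closed under negation (for every q ∈ Q, the query x ↦ 1 − q(x) is also in Q). If (D̂, Q̂) ∈ Δ(X) × Δ(Q) is an α-approximate equilibrium of the query release game for D, then the data player's strategy D̂ is 2α-accurate: max_{q ∈ Q} |q(D) − E_{x∼D̂}[q(x)]| ≤ 2α. -/
/-!
Playing the true dataset `D` (uniformly) earns the data player payoff exactly `0` against every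
query, so some row `D k` has payoff at most `0` against `ν`; the equilibrium conditions then give
`A(μ, ν) ≤ α` and hence `A(μ, q) ≤ 2α` for every query `q`. Since `A(μ, q) = q(D) - E_μ q` changes
sign under `q ↦ 1 - q`, closure under negation turns this one-sided bound into `|A(μ, q)| ≤ 2α`.
-/

open Finset

lemma sum_mul_const_sub {X : Type*} [Fintype X] {μ : X → ℝ} (hμ1 : ∑ x, μ x = 1)
    (c : ℝ) (f : X → ℝ) : ∑ x, μ x * (c - f x) = c - ∑ x, μ x * f x := by
  simp only [mul_sub, sum_sub_distrib, ← sum_mul, hμ1, one_mul]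

lemma mean_const_sub {κ : Type*} [Fintype κ] [Nonempty κ] (c : ℝ) (f : κ → ℝ) :
    1 / (Fintype.card κ : ℝ) * ∑ k, (c - f k) = c - 1 / (Fintype.card κ : ℝ) * ∑ k, f k := by
  rw [sum_sub_distrib, sum_const, card_univ, nsmul_eq_mul]
  field_simp

lemma sum_sub_eq_zero_of_eq_mean {κ : Type*} [Fintype κ] [Nonempty κ] {f : κ → ℝ} {c : ℝ}
    (hc : c = 1 / (Fintype.card κ : ℝ) * ∑ k, f k) : ∑ k, (c - f k) = 0 := by
  rw [sum_sub_distrib, sum_const, card_univ, nsmul_eq_mul, hc]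
  field_simp
  ring

lemma abs_le_of_forall_le_of_neg_mem {ι α : Type*} [AddCommGroup α] [LinearOrder α]
    [IsOrderedAddMonoid α] {e : ι → α} {b : α} (hneg : ∀ i, ∃ j, e j = -e i)
    (hle : ∀ i, e i ≤ b) (i : ι) : |e i| ≤ b := by
  obtain ⟨j, hj⟩ := hneg i
  exact abs_le'.2 ⟨hle i, hj ▸ hle j⟩

theorem query_release_equilibrium_accuracy_general
    {X ι : Type*} [Fintype X] [Fintype ι]
    (n : ℕ) (hn : 1 ≤ n) (D : Fin n → X)
    -- the query class, indexed by `ι`, each query taking values in [0,1]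
    (q : ι → X → ℝ)
    -- closure under negation
    (hneg : ∀ i : ι, ∃ j : ι, ∀ x, q j x = 1 - q i x)
    -- value of each query on the dataset
    (qD : ι → ℝ) (hqD : ∀ i, qD i = (1 / (n : ℝ)) * ∑ k, q i (D k))
    -- the payoff of the query release game
    (A : X → ι → ℝ) (hA : ∀ x i, A x i = qD i - q i x)
    -- mixed strategies of the data player and the query player
    (μ : X → ℝ) (hμ1 : ∑ x, μ x = 1)
    (ν : ι → ℝ)
    (α : ℝ)
    -- `(μ, ν)` is an `α`-approximate equilibrium:
    -- `max_q A(μ, q) − α ≤ A(μ, ν) ≤ min_x A(x, ν) + α`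
    (heq₁ : ∀ i : ι, (∑ x, μ x * A x i) - α ≤ ∑ x, ∑ i, μ x * ν i * A x i)
    (heq₂ : ∀ y : X, (∑ x, ∑ i, μ x * ν i * A x i) ≤ (∑ i, ν i * A y i) + α) :
    -- conclusion: `μ` is `2α`-accurate
    ∀ i : ι, |qD i - ∑ x, μ x * q i x| ≤ 2 * α := by
  have : NeZero n := ⟨by omega⟩
  have hqD' : ∀ i, qD i = 1 / (Fintype.card (Fin n) : ℝ) * ∑ k, q i (D k) := by
    simpa only [Fintype.card_fin] using hqD
  have hdata : ∀ i, ∑ k, A (D k) i = 0 := fun i => by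
    simpa only [hA] using sum_sub_eq_zero_of_eq_mean (hqD' i)
  obtain ⟨k, -, hk⟩ : ∃ k ∈ univ, ∑ i, ν i * A (D k) i ≤ 0 := by
    refine exists_le_of_sum_le univ_nonempty (le_of_eq ?_)
    rw [sum_comm]
    simp only [← mul_sum, hdata, mul_zero, sum_const_zero]
  have hpayoff : ∀ i, ∑ x, μ x * A x i = qD i - ∑ x, μ x * q i x := fun i => by
    simpa only [hA] using sum_mul_const_sub hμ1 (qD i) (q i)
  refine abs_le_of_forall_le_of_neg_mem (fun i => ?_) (fun i => ?_)
  · obtain ⟨j, hj⟩ := hneg i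
    refine ⟨j, ?_⟩
    simp only [hqD', hj, mean_const_sub, sum_mul_const_sub hμ1]
    ring
  · linarith [heq₁ i, heq₂ (D k), hpayoff i]

/-- If `(μ, ν)` is an `α`-approximate equilibrium of the query release
game for the dataset `D`, and the (finite) query class is closed under negation, then the
data player's mixed strategy `μ` is `2α`-accurate for every query. -/
theorem query_release_equilibrium_accuracy
    {X ι : Type*} [Fintype X] [Nonempty X] [Fintype ι] [Nonempty ι]
    (n : ℕ) (hn : 1 ≤ n) (D : Fin n → X)
    -- the query class, indexed by `ι`, each query taking values in [0,1]
    (q : ι → X → ℝ) (hq : ∀ i x, q i x ∈ Set.Icc (0 : ℝ) 1)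
    -- closure under negation
    (hneg : ∀ i : ι, ∃ j : ι, ∀ x, q j x = 1 - q i x)
    -- value of each query on the dataset
    (qD : ι → ℝ) (hqD : ∀ i, qD i = (1 / (n : ℝ)) * ∑ k, q i (D k))
    -- the payoff of the query release game
    (A : X → ι → ℝ) (hA : ∀ x i, A x i = qD i - q i x)
    -- mixed strategies of the data player and the query player
    (μ : X → ℝ) (hμ0 : ∀ x, 0 ≤ μ x) (hμ1 : ∑ x, μ x = 1)
    (ν : ι → ℝ) (hν0 : ∀ i, 0 ≤ ν i) (hν1 : ∑ i, ν i = 1)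
    (α : ℝ)
    -- `(μ, ν)` is an `α`-approximate equilibrium:
    -- `max_q A(μ, q) − α ≤ A(μ, ν) ≤ min_x A(x, ν) + α`
    (heq₁ : ∀ i : ι, (∑ x, μ x * A x i) - α ≤ ∑ x, ∑ i, μ x * ν i * A x i)
    (heq₂ : ∀ y : X, (∑ x, ∑ i, μ x * ν i * A x i) ≤ (∑ i, ν i * A y i) + α) :
    -- conclusion: `μ` is `2α`-accurate
    ∀ i : ι, |qD i - ∑ x, μ x * q i x| ≤ 2 * α :=
  query_release_equilibrium_accuracy_general n hn D q hneg qD hqD A hA μ hμ1 ν α heq₁ heq₂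
end

section
/- Let X be a finite data domain, D ∈ X^n, Q a finite query class with each q : X → [0,1], ρ > 0, T ∈ ℕ, β ∈ (0,1), and ρ₀ = ρ/T. Consider an adaptive process where, for t = 1, …, T, a distribution D̂^t on X is produced as an arbitrary function of the previously sampled queries q_1, …, q_{t−1}, and then q_t is sampled from the exponential mechanism over Q with score S_t(D, q) = q(D) − E_{x∼D̂^t}[q(x)] (of sensitivity 1/n) and parameter √(2ρ₀), i.e. q_t = q with probability proportional to exp(√(2ρ₀) · n · S_t(D, q)/2). Then with probability at least 1 − β/2, the query player's average regret satisfies (1/T)(max_{q∈Q} Σ_{t=1}^T S_t(D, q) − Σ_{t=1}^T S_t(D, q_t)) ≤ (1/n)·√(2T/ρ)·log(2T|Q|/β). -/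
/-!
Whatever the history, the exponential mechanism with inverse temperature `κ = √(2ρ₀)·n/2`
puts mass at most `exp(-κc)` on each query whose score is more than `c` below the best one, so a
round has regret above `c` with probability at most `|Q|·exp(-κc)`, which is `β/(2T)` for
`c = (1/n)·√(2T/ρ)·log(2T|Q|/β)`. A union bound over the `T` rounds of the adaptively sampled
trajectory, proved by peeling off the last round, shows that with probability at least `1 - β/2`
every round has regret at most `c`, and then so does the average.
-/

open Finset

section Trajectory

variable {ι : Type*} {T : ℕ}

def trajProb (p : (t : Fin T) → (Fin t → ι) → ι → ℝ) (σ : Fin T → ι) : ℝ :=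
  ∏ t, p t (Fin.take t t.2.le σ) (σ t)

lemma take_snoc (τ : Fin T → ι) (i : ι) (t : ℕ) (ht : t ≤ T) :
    Fin.take t (ht.trans T.le_succ) (Fin.snoc τ i : Fin (T + 1) → ι) = Fin.take t ht τ := by
  rw [← Fin.take_take ht T.le_succ, Fin.take_eq_init, Fin.init_snoc]

lemma take_castSucc_snoc (τ : Fin T → ι) (i : ι) (t : Fin T) :
    Fin.take t.castSucc t.castSucc.2.le (Fin.snoc τ i : Fin (T + 1) → ι) =
      Fin.take t t.2.le τ :=
  take_snoc τ i t t.2.le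

lemma take_last_snoc (τ : Fin T → ι) (i : ι) :
    Fin.take (Fin.last T) (Fin.last T).2.le (Fin.snoc τ i : Fin (T + 1) → ι) = τ :=
  (take_snoc τ i T le_rfl).trans (Fin.take_eq_self τ)

lemma trajProb_nonneg (p : (t : Fin T) → (Fin t → ι) → ι → ℝ) (hp : ∀ t h i, 0 ≤ p t h i)
    (σ : Fin T → ι) : 0 ≤ trajProb p σ :=
  prod_nonneg fun _ _ => hp _ _ _

lemma trajProb_snoc (p : (t : Fin (T + 1)) → (Fin t → ι) → ι → ℝ) (τ : Fin T → ι)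
    (i : ι) :
    trajProb p (Fin.snoc τ i) = trajProb (fun t => p t.castSucc) τ * p (Fin.last T) τ i := by
  rw [trajProb, Fin.prod_univ_castSucc]
  congr 1
  · refine prod_congr rfl fun t _ => ?_
    rw [Fin.snoc_castSucc]
    exact congrArg₂ _ (take_castSucc_snoc τ i t) rfl
  · rw [Fin.snoc_last]
    exact congrArg₂ _ (take_last_snoc τ i) rfl

variable [Fintype ι]

lemma sum_fin_succ_pi_eq_sum_snoc (f : (Fin (T + 1) → ι) → ℝ) :
    ∑ σ, f σ = ∑ τ : Fin T → ι, ∑ i, f (Fin.snoc τ i) := by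
  rw [← (Fin.snocEquiv fun _ => ι).sum_comp, Fintype.sum_prod_type, sum_comm]
  rfl

variable (p : (t : Fin T) → (Fin t → ι) → ι → ℝ)

lemma sum_trajProb (hp : ∀ t h, ∑ i, p t h i = 1) : ∑ σ, trajProb p σ = 1 := by
  induction T with
  | zero => simp [trajProb]
  | succ T ih =>
    simp only [sum_fin_succ_pi_eq_sum_snoc, trajProb_snoc, ← mul_sum, hp, mul_one]
    exact ih _ fun t => hp t.castSucc

lemma sum_trajProb_filter_exists_le (hp0 : ∀ t h i, 0 ≤ p t h i)
    (hp1 : ∀ t h, ∑ i, p t h i = 1) (Bad : (t : Fin T) → (Fin t → ι) → ι → Prop)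
    [∀ t h, DecidablePred (Bad t h)] {ε : ℝ}
    (hBad : ∀ t h, ∑ i ∈ univ.filter (Bad t h), p t h i ≤ ε) :
    ∑ σ ∈ univ.filter (fun σ => ∃ t, Bad t (Fin.take t t.2.le σ) (σ t)), trajProb p σ ≤
      T * ε := by
  induction T with
  | zero => simp
  | succ T ih =>
    set q : (t : Fin T) → (Fin t → ι) → ι → ℝ := fun t => p t.castSucc
    set Earlier : (Fin T → ι) → Prop :=
      fun τ => ∃ t : Fin T, Bad t.castSucc (Fin.take t t.2.le τ) (τ t)
    have hsplit : ∀ τ i, (∃ t, Bad t (Fin.take t t.2.le (Fin.snoc τ i : Fin (T + 1) → ι))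
        ((Fin.snoc τ i : Fin (T + 1) → ι) t)) ↔ Earlier τ ∨ Bad (Fin.last T) τ i := by
      intro τ i
      rw [Fin.exists_fin_succ', take_last_snoc, Fin.snoc_last]
      simp only [Fin.snoc_castSucc, take_castSucc_snoc]
      rfl
    calc ∑ σ ∈ univ.filter (fun σ => ∃ t, Bad t (Fin.take t t.2.le σ) (σ t)), trajProb p σ
        = ∑ τ, ∑ i, if Earlier τ ∨ Bad (Fin.last T) τ i then
            trajProb q τ * p (Fin.last T) τ i else 0 := by
          rw [sum_filter, sum_fin_succ_pi_eq_sum_snoc]; simp only [hsplit, trajProb_snoc]; rfl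
      _ ≤ ∑ τ, ∑ i, ((if Earlier τ then trajProb q τ * p (Fin.last T) τ i else 0) +
            if Bad (Fin.last T) τ i then trajProb q τ * p (Fin.last T) τ i else 0) := by
          gcongr with τ _ i _
          have := mul_nonneg (trajProb_nonneg q (fun t => hp0 t.castSucc) τ)
            (hp0 (Fin.last T) τ i)
          by_cases hA : Earlier τ <;> by_cases hB : Bad (Fin.last T) τ i <;> simp [hA, hB, this]
      _ = ∑ τ ∈ univ.filter Earlier, trajProb q τ +
            ∑ τ, trajProb q τ * ∑ i ∈ univ.filter (Bad (Fin.last T) τ), p (Fin.last T) τ i := by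
          simp only [sum_add_distrib]
          rw [sum_filter]
          congr 1
          · refine sum_congr rfl fun τ _ => ?_
            split_ifs <;> simp [← mul_sum, hp1]
          · simp only [mul_sum, sum_filter, mul_ite, mul_zero]
      _ ≤ T * ε + ∑ τ, trajProb q τ * ε := by
          gcongr with τ
          · exact ih q (fun t => hp0 t.castSucc) (fun t => hp1 t.castSucc) _
              fun t => hBad t.castSucc
          · exact trajProb_nonneg q (fun t => hp0 t.castSucc) τ
          · exact hBad (Fin.last T) τ
      _ = (T + 1 : ℕ) * ε := by
          rw [← sum_mul, sum_trajProb q fun t => hp1 t.castSucc]; push_cast; ring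

lemma one_sub_mul_le_sum_trajProb_filter_forall_not (hp0 : ∀ t h i, 0 ≤ p t h i)
    (hp1 : ∀ t h, ∑ i, p t h i = 1) (Bad : (t : Fin T) → (Fin t → ι) → ι → Prop)
    [∀ t h, DecidablePred (Bad t h)] {ε : ℝ}
    (hBad : ∀ t h, ∑ i ∈ univ.filter (Bad t h), p t h i ≤ ε) :
    1 - T * ε ≤
      ∑ σ ∈ univ.filter (fun σ => ∀ t, ¬ Bad t (Fin.take t t.2.le σ) (σ t)), trajProb p σ := by
  have hsplit := sum_filter_add_sum_filter_not univ
    (fun σ => ∃ t, Bad t (Fin.take t t.2.le σ) (σ t)) (trajProb p)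
  simp only [not_exists, sum_trajProb p hp1] at hsplit
  linarith [sum_trajProb_filter_exists_le p hp0 hp1 Bad hBad]

end Trajectory

section ExpMech

variable {ι : Type*} [Fintype ι]

/-- The exponential mechanism with privacy parameter `ρ` for a score of sensitivity `Δ` is
`expMech (ρ / (2 * Δ))`. -/
noncomputable def expMech (κ : ℝ) (s : ι → ℝ) (i : ι) : ℝ :=
  Real.exp (κ * s i) / ∑ j, Real.exp (κ * s j)

lemma expMech_nonneg (κ : ℝ) (s : ι → ℝ) (i : ι) : 0 ≤ expMech κ s i := by
  unfold expMech
  positivity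

lemma sum_expMech [Nonempty ι] (κ : ℝ) (s : ι → ℝ) : ∑ i, expMech κ s i = 1 := by
  simp only [expMech, ← sum_div]
  exact div_self (sum_pos (fun _ _ => Real.exp_pos _) univ_nonempty).ne'

lemma expMech_le_exp_neg_mul {κ : ℝ} (hκ : 0 ≤ κ) {s : ι → ℝ} {c : ℝ} {i j : ι}
    (h : c < s j - s i) : expMech κ s i ≤ Real.exp (-(κ * c)) := by
  refine div_le_of_le_mul₀ (sum_nonneg fun _ _ => (Real.exp_pos _).le) (Real.exp_pos _).le ?_
  calc Real.exp (κ * s i) ≤ Real.exp (-(κ * c)) * Real.exp (κ * s j) := by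
        rw [← Real.exp_add]
        exact Real.exp_le_exp.2 (by nlinarith)
    _ ≤ Real.exp (-(κ * c)) * ∑ j, Real.exp (κ * s j) :=
        mul_le_mul_of_nonneg_left
          (single_le_sum (f := fun j => Real.exp (κ * s j)) (fun _ _ => (Real.exp_pos _).le)
            (mem_univ j)) (Real.exp_pos _).le

lemma sum_filter_expMech_le {κ : ℝ} (hκ : 0 ≤ κ) (s : ι → ℝ) (c : ℝ)
    [DecidablePred fun i => ∃ j, c < s j - s i] :
    ∑ i ∈ univ.filter (fun i => ∃ j, c < s j - s i), expMech κ s i ≤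
      Fintype.card ι * Real.exp (-(κ * c)) := by
  calc _ ≤ ∑ _i ∈ univ.filter (fun i => ∃ j, c < s j - s i), Real.exp (-(κ * c)) :=
        sum_le_sum fun i hi => (mem_filter.1 hi).2.elim fun _ hj => expMech_le_exp_neg_mul hκ hj
    _ ≤ Fintype.card ι * Real.exp (-(κ * c)) := by
        rw [sum_const, nsmul_eq_mul]
        gcongr
        exact_mod_cast card_filter_le _ _

end ExpMech

lemma one_div_mul_sum_sub_sum_le {T : ℕ} (hT : 0 < T) {a b : Fin T → ℝ} {c : ℝ}
    (h : ∀ t, a t - b t ≤ c) : 1 / (T : ℝ) * (∑ t, a t - ∑ t, b t) ≤ c := by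
  have hsum : ∑ t, (a t - b t) ≤ T * c := by
    simpa using sum_le_sum fun t (_ : t ∈ univ) => h t
  rw [← sum_sub_distrib, one_div_mul_eq_div, div_le_iff₀ (by exact_mod_cast hT)]
  linarith

theorem query_player_regret_exponential_mechanism_general
    {ι : Type*} [Fintype ι] [Nonempty ι]
    (n : ℕ) (hn : 1 ≤ n)
    (ρ : ℝ) (hρ : 0 < ρ) (T : ℕ) (hT : 1 ≤ T)
    (β : ℝ) (hβ : β ∈ Set.Ioo (0 : ℝ) 1)
    (ρ₀ : ℝ) (hρ₀ : ρ₀ = ρ / (T : ℝ))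
    -- the score function `S_t(D, q) = q(D) − E_{x∼D̂^t}[q(x)]`
    (S : (t : Fin T) → (Fin (t : ℕ) → ι) → ι → ℝ)
    -- the exponential mechanism at round `t`: sample `q_t = i` with probability
    -- proportional to `exp(√(2ρ₀)·n·S_t(D, i)/2)`  (sensitivity `1/n`)
    (EM : (t : Fin T) → (Fin (t : ℕ) → ι) → ι → ℝ)
    (hEM : ∀ t h i, EM t h i =
      Real.exp (Real.sqrt (2 * ρ₀) * (n : ℝ) * S t h i / 2) /
        ∑ j, Real.exp (Real.sqrt (2 * ρ₀) * (n : ℝ) * S t h j / 2)) :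
    -- with probability at least `1 − β/2` over the sampled query trajectory `σ`,
    -- the query player's average regret is bounded
    (1 : ℝ) - β / 2 ≤
      ∑ σ ∈ Finset.univ.filter (fun σ : Fin T → ι =>
          ∀ i : ι,
            (1 / (T : ℝ)) *
              ((∑ t : Fin T, S t (fun k : Fin (t : ℕ) => σ ⟨k, k.2.trans t.2⟩) i) -
                ∑ t : Fin T, S t (fun k : Fin (t : ℕ) => σ ⟨k, k.2.trans t.2⟩) (σ t)) ≤
            (1 / (n : ℝ)) * Real.sqrt (2 * (T : ℝ) / ρ) *
              Real.log (2 * (T : ℝ) * (Fintype.card ι : ℝ) / β)),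
        ∏ t : Fin T, EM t (fun k : Fin (t : ℕ) => σ ⟨k, k.2.trans t.2⟩) (σ t) := by
  classical
  set L := Real.log (2 * (T : ℝ) * (Fintype.card ι : ℝ) / β)
  set c := (1 / (n : ℝ)) * Real.sqrt (2 * (T : ℝ) / ρ) * L
  set κ := Real.sqrt (2 * ρ₀) * (n : ℝ) / 2
  have hκc : κ * c = L := by
    have hsqrt : Real.sqrt (2 * ρ₀) * Real.sqrt (2 * T / ρ) = 2 := by
      rw [← Real.sqrt_mul' _ (by positivity), hρ₀, show 2 * (ρ / T) * (2 * T / ρ) = (2 : ℝ) ^ 2 by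
        field_simp, Real.sqrt_sq zero_le_two]
    calc κ * c = Real.sqrt (2 * ρ₀) * Real.sqrt (2 * T / ρ) / 2 * L := by
          simp only [κ, c]; field_simp
      _ = L := by rw [hsqrt]; ring
  obtain rfl : EM = fun t h => expMech κ (S t h) := by
    funext t h i
    simp only [hEM, expMech, κ, div_mul_eq_mul_div]
  have hround : ∀ t h, ∑ i ∈ univ.filter (fun i => ∃ j, c < S t h j - S t h i),
      expMech κ (S t h) i ≤ β / (2 * T) := fun t h => by
    refine (sum_filter_expMech_le (by positivity) (S t h) c).trans_eq ?_
    rw [hκc, Real.exp_neg, Real.exp_log (by have := hβ.1; positivity)]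
    field_simp
  have hgood := one_sub_mul_le_sum_trajProb_filter_forall_not _
    (fun _ _ => expMech_nonneg κ _) (fun _ _ => sum_expMech κ _) _ hround
  rw [show (T : ℝ) * (β / (2 * T)) = β / 2 by field_simp] at hgood
  refine hgood.trans (sum_le_sum_of_subset_of_nonneg (fun σ hσ => ?_)
    fun σ _ _ => trajProb_nonneg _ (fun _ _ => expMech_nonneg κ _) σ)
  simp only [mem_filter, mem_univ, true_and, not_exists, not_lt] at hσ ⊢
  exact fun i => one_div_mul_sum_sub_sum_le hT fun t => hσ t i

/-- (Query player's regret via the exponential mechanism.)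
In the adaptive process where at each round `t` the data player produces a distribution
`D̂^t` as an arbitrary function of the previously sampled queries, and the query player
samples `q_t` from the exponential mechanism with score
`S_t(D, q) = q(D) − E_{x∼D̂^t}[q(x)]` (sensitivity `1/n`) and parameter `√(2ρ₀)` with
`ρ₀ = ρ/T`, with probability at least `1 − β/2` the query player's average regret is at
most `(1/n)·√(2T/ρ)·log(2T|Q|/β)`. -/
theorem query_player_regret_exponential_mechanism
    {X ι : Type*} [Fintype X] [Nonempty X] [Fintype ι] [Nonempty ι]
    (n : ℕ) (hn : 1 ≤ n) (D : Fin n → X)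
    -- the query class, indexed by `ι`, each query taking values in [0,1]
    (q : ι → X → ℝ) (hq : ∀ i x, q i x ∈ Set.Icc (0 : ℝ) 1)
    (ρ : ℝ) (hρ : 0 < ρ) (T : ℕ) (hT : 1 ≤ T)
    (β : ℝ) (hβ : β ∈ Set.Ioo (0 : ℝ) 1)
    (ρ₀ : ℝ) (hρ₀ : ρ₀ = ρ / (T : ℝ))
    -- the data player's distribution at round `t`, an arbitrary function of the
    -- previously sampled queries `q_1, …, q_{t−1}`
    (DHat : (t : Fin T) → (Fin (t : ℕ) → ι) → X → ℝ)
    (hDHat0 : ∀ t h x, 0 ≤ DHat t h x)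
    (hDHat1 : ∀ t h, ∑ x, DHat t h x = 1)
    -- the score function `S_t(D, q) = q(D) − E_{x∼D̂^t}[q(x)]`
    (S : (t : Fin T) → (Fin (t : ℕ) → ι) → ι → ℝ)
    (hS : ∀ t h i, S t h i =
      (1 / (n : ℝ)) * (∑ k, q i (D k)) - ∑ x, DHat t h x * q i x)
    -- the exponential mechanism at round `t`: sample `q_t = i` with probability
    -- proportional to `exp(√(2ρ₀)·n·S_t(D, i)/2)`  (sensitivity `1/n`)
    (EM : (t : Fin T) → (Fin (t : ℕ) → ι) → ι → ℝ)
    (hEM : ∀ t h i, EM t h i =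
      Real.exp (Real.sqrt (2 * ρ₀) * (n : ℝ) * S t h i / 2) /
        ∑ j, Real.exp (Real.sqrt (2 * ρ₀) * (n : ℝ) * S t h j / 2)) :
    -- with probability at least `1 − β/2` over the sampled query trajectory `σ`,
    -- the query player's average regret is bounded
    (1 : ℝ) - β / 2 ≤
      ∑ σ ∈ Finset.univ.filter (fun σ : Fin T → ι =>
          ∀ i : ι,
            (1 / (T : ℝ)) *
              ((∑ t : Fin T, S t (fun k : Fin (t : ℕ) => σ ⟨k, k.2.trans t.2⟩) i) -
                ∑ t : Fin T, S t (fun k : Fin (t : ℕ) => σ ⟨k, k.2.trans t.2⟩) (σ t)) ≤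
            (1 / (n : ℝ)) * Real.sqrt (2 * (T : ℝ) / ρ) *
              Real.log (2 * (T : ℝ) * (Fintype.card ι : ℝ) / β)),
        ∏ t : Fin T, EM t (fun k : Fin (t : ℕ) => σ ⟨k, k.2.trans t.2⟩) (σ t) :=
  query_player_regret_exponential_mechanism_general n hn ρ hρ T hT β hβ ρ₀ hρ₀ S EM hEM
end

section
/- Let γ > 0 and s > 0 be real numbers, and let p, p′ be real numbers with 0 < p ≤ e^{−γ}, 0 < p′ ≤ e^{−γ}, and p ≥ e^{−s}·p′. Then (1 − p)/(1 − p′) ≤ 1 + (1 − e^{−s})/(e^{γ} − 1) ≤ e^{s/γ}. -/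
/-!
Since `p ≥ e^{-s} p'`, we have `1 - p ≤ (1 - p') + (1 - e^{-s}) p'`, and `p' ↦ p' / (1 - p')` is
increasing, so `p' ≤ e^{-γ}` gives `p' / (1 - p') ≤ 1 / (e^γ - 1)`. The second inequality follows
from `1 - e^{-s} ≤ s`, `γ ≤ e^γ - 1` and `1 + x ≤ e^x`.
-/

open Real

theorem one_sub_div_one_sub_le {p q t : ℝ} (hq : q < 1) (hp : t * q ≤ p) :
    (1 - p) / (1 - q) ≤ 1 + (1 - t) * (q / (1 - q)) := by
  have hq' : 0 < 1 - q := sub_pos.mpr hq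
  rw [div_le_iff₀ hq', add_mul, one_mul, mul_assoc, div_mul_cancel₀ _ hq'.ne']
  linarith

theorem div_one_sub_le_of_le_exp_neg {q γ : ℝ} (hγ : 0 < γ) (hq : q ≤ exp (-γ)) :
    q / (1 - q) ≤ 1 / (exp γ - 1) := by
  have hexp : 0 < exp γ - 1 := sub_pos.mpr (one_lt_exp_iff.mpr hγ)
  have hqexp : q * exp γ ≤ 1 := by
    simpa [← exp_add] using mul_le_mul_of_nonneg_right hq (exp_pos γ).le
  have hq' : 0 < 1 - q := by
    have := exp_lt_one_iff.mpr (neg_neg_iff_pos.mpr hγ)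
    linarith
  rw [div_le_div_iff₀ hq' hexp]
  linarith

theorem one_sub_exp_neg_div_exp_sub_one_le {s γ : ℝ} (hs : 0 ≤ s) (hγ : 0 < γ) :
    (1 - exp (-s)) / (exp γ - 1) ≤ s / γ :=
  div_le_div₀ hs (by linarith [add_one_le_exp (-s)]) hγ (by linarith [add_one_le_exp γ])

theorem rejection_event_inequality_general
    (γ s p p' : ℝ) (hγ : 0 < γ) (hs : 0 < s)
    (hp'1 : p' ≤ Real.exp (-γ))
    (hratio : Real.exp (-s) * p' ≤ p) :
    (1 - p) / (1 - p') ≤ 1 + (1 - Real.exp (-s)) / (Real.exp γ - 1) ∧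
      1 + (1 - Real.exp (-s)) / (Real.exp γ - 1) ≤ Real.exp (s / γ) := by
  have hp' : p' < 1 := hp'1.trans_lt (exp_lt_one_iff.mpr (neg_neg_iff_pos.mpr hγ))
  have hexp_neg : 0 ≤ 1 - exp (-s) := sub_nonneg.mpr (exp_le_one_iff.mpr (by linarith))
  constructor
  · calc (1 - p) / (1 - p') ≤ 1 + (1 - exp (-s)) * (p' / (1 - p')) :=
          one_sub_div_one_sub_le hp' hratio
      _ ≤ 1 + (1 - exp (-s)) * (1 / (exp γ - 1)) := by
          gcongr 1 + _ * ?_; exact div_one_sub_le_of_le_exp_neg hγ hp'1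
      _ = 1 + (1 - exp (-s)) / (exp γ - 1) := by rw [mul_one_div]
  · calc 1 + (1 - exp (-s)) / (exp γ - 1) ≤ s / γ + 1 := by
          linarith [one_sub_exp_neg_div_exp_sub_one_le hs.le hγ]
      _ ≤ exp (s / γ) := add_one_le_exp _

/-- (Key inequality for the rejection-event privacy loss.)
If `0 < p ≤ e^{−γ}`, `0 < p′ ≤ e^{−γ}` and `p ≥ e^{−s}·p′`, then
`(1 − p)/(1 − p′) ≤ 1 + (1 − e^{−s})/(e^{γ} − 1) ≤ e^{s/γ}`. -/
theorem rejection_event_inequality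
    (γ s p p' : ℝ) (hγ : 0 < γ) (hs : 0 < s)
    (hp0 : 0 < p) (hp1 : p ≤ Real.exp (-γ))
    (hp'0 : 0 < p') (hp'1 : p' ≤ Real.exp (-γ))
    (hratio : Real.exp (-s) * p' ≤ p) :
    (1 - p) / (1 - p') ≤ 1 + (1 - Real.exp (-s)) / (Real.exp γ - 1) ∧
      1 + (1 - Real.exp (-s)) / (Real.exp γ - 1) ≤ Real.exp (s / γ) :=
  rejection_event_inequality_general γ s p p' hγ hs hp'1 hratio
end

section
/- Let M be a mechanism from datasets D ∈ X^n (X a finite domain) to probability distributions on a finite set R. If M satisfies pure ε-differential privacy, i.e. for all neighboring datasets D, D′ (differing in one entry) and all r ∈ R, M(D)(r) ≤ e^ε · M(D′)(r), then M satisfies (ε²/2)-zCDP: for all neighboring D, D′ and all α > 1, D_α(M(D) ‖ M(D′)) ≤ (ε²/2)·α. -/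
/-!
The Rényi sum `∑ q (p/q)^α` is the mean, under `q`, of `x ↦ x ^ α` applied to the likelihood
ratio `p / q`. Pure DP confines that ratio to `[e^{-ε}, e^ε]` and its `q`-mean is `1`, so by
convexity the sum is at most the chord of `x ^ α` between the endpoints, evaluated at `1`. That
chord value is `cosh ((2α - 1) ε/2) / cosh (ε/2)`, and since `tanh x ≤ x`, `log cosh` grows by at
most `(s² - 1) u² / 2` from `u` to `s u`, which gives the bound `exp (ε² α (α - 1) / 2)`.
-/

open Real Set Finset

namespace Real

theorem sinh_le_mul_cosh {x : ℝ} (hx : 0 ≤ x) : sinh x ≤ x * cosh x := by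
  have hderiv (y : ℝ) : HasDerivAt (fun x ↦ x * cosh x - sinh x) (y * sinh y) y :=
    (((hasDerivAt_id' y).fun_mul (hasDerivAt_cosh y)).fun_sub (hasDerivAt_sinh y)).congr_deriv
      (by ring)
  have hmono : MonotoneOn (fun x ↦ x * cosh x - sinh x) (Ici 0) :=
    monotoneOn_of_hasDerivWithinAt_nonneg (convex_Ici 0)
      (fun y _ ↦ (hderiv y).continuousAt.continuousWithinAt)
      (fun y _ ↦ (hderiv y).hasDerivWithinAt)
      (fun y hy ↦ by
        rw [interior_Ici] at hy
        exact mul_nonneg hy.le (sinh_nonneg_iff.2 hy.le))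
  simpa using hmono self_mem_Ici hx hx

theorem monotoneOn_sq_div_two_sub_log_cosh :
    MonotoneOn (fun x ↦ x ^ 2 / 2 - log (cosh x)) (Ici 0) := by
  have hderiv (y : ℝ) :
      HasDerivAt (fun x ↦ x ^ 2 / 2 - log (cosh x)) (y - sinh y / cosh y) y :=
    (((hasDerivAt_pow 2 y).div_const 2).fun_sub
      ((hasDerivAt_cosh y).log (cosh_pos y).ne')).congr_deriv (by norm_num)
  refine monotoneOn_of_hasDerivWithinAt_nonneg (convex_Ici 0)
    (fun y _ ↦ (hderiv y).continuousAt.continuousWithinAt)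
    (fun y _ ↦ (hderiv y).hasDerivWithinAt) (fun y hy ↦ ?_)
  rw [interior_Ici] at hy
  rw [sub_nonneg, div_le_iff₀ (cosh_pos y)]
  exact sinh_le_mul_cosh hy.le

theorem cosh_mul_le_cosh_mul_exp {u s : ℝ} (hu : 0 ≤ u) (hs : 1 ≤ s) :
    cosh (s * u) ≤ cosh u * exp (u ^ 2 * (s ^ 2 - 1) / 2) := by
  have hsu : u ≤ s * u := le_mul_of_one_le_left hu hs
  have hlog : log (cosh (s * u)) ≤ log (cosh u) + u ^ 2 * (s ^ 2 - 1) / 2 := by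
    have := monotoneOn_sq_div_two_sub_log_cosh hu (hu.trans hsu) hsu
    simp only at this
    linarith
  rwa [← exp_le_exp, exp_add, exp_log (cosh_pos _), exp_log (cosh_pos _)] at hlog

/-- The left side is `e^ε - e^{-ε}` times the chord of `x ↦ x ^ α` through `e^{-ε}` and `e^ε`,
evaluated at `1`. -/
theorem chord_rpow_exp_le {ε α : ℝ} (hε : 0 ≤ ε) (hα : 1 ≤ α) :
    (exp ε - 1) * exp (-ε) ^ α + (1 - exp (-ε)) * exp ε ^ α ≤
      (exp ε - exp (-ε)) * exp (ε ^ 2 / 2 * α * (α - 1)) := by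
  have hexp_α : exp ε ^ α = exp (ε / 2) * exp ((2 * α - 1) * (ε / 2)) := by
    rw [← exp_mul, ← exp_add]; congr 1; ring
  have hexp_neg_α : exp (-ε) ^ α = (exp (ε / 2) * exp ((2 * α - 1) * (ε / 2)))⁻¹ := by
    rw [← exp_mul, neg_mul, exp_neg, exp_mul, hexp_α]
  have hexp : exp ε = exp (ε / 2) * exp (ε / 2) := by rw [← exp_add]; congr 1; ring
  have hchord : (exp ε - 1) * exp (-ε) ^ α + (1 - exp (-ε)) * exp ε ^ α =
      4 * sinh (ε / 2) * cosh ((2 * α - 1) * (ε / 2)) := by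
    rw [hexp_neg_α, hexp_α, exp_neg, hexp, sinh_eq, cosh_eq, exp_neg, exp_neg]
    field_simp
    ring
  have hwidth : exp ε - exp (-ε) = 4 * sinh (ε / 2) * cosh (ε / 2) := by
    rw [exp_neg, hexp, sinh_eq, cosh_eq, exp_neg]
    field_simp
    ring
  have hsinh : 0 ≤ sinh (ε / 2) := sinh_nonneg_iff.2 (by positivity)
  calc _ = 4 * sinh (ε / 2) * cosh ((2 * α - 1) * (ε / 2)) := hchord
    _ ≤ 4 * sinh (ε / 2) * (cosh (ε / 2) * exp ((ε / 2) ^ 2 * ((2 * α - 1) ^ 2 - 1) / 2)) := by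
      gcongr
      exact cosh_mul_le_cosh_mul_exp (by positivity) (by linarith)
    _ = _ := by
      rw [hwidth, show (ε / 2) ^ 2 * ((2 * α - 1) ^ 2 - 1) / 2 = ε ^ 2 / 2 * α * (α - 1) by ring]
      ring

theorem rpow_mul_rpow_one_sub {x y α : ℝ} (hx : 0 ≤ x) (hy : 0 ≤ y) (hα : α ≠ 1) :
    x ^ α * y ^ (1 - α) = y * (x / y) ^ α := by
  rcases hy.eq_or_lt with rfl | hy
  · simp [zero_rpow (sub_ne_zero.2 hα.symm)]
  rw [div_rpow hx hy.le, rpow_sub hy, rpow_one]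
  field_simp

end Real

theorem ConvexOn.sub_mul_le_chord {s : Set ℝ} {f : ℝ → ℝ} {a b x : ℝ} (hf : ConvexOn ℝ s f)
    (ha : a ∈ s) (hb : b ∈ s) (hax : a ≤ x) (hxb : x ≤ b) :
    (b - a) * f x ≤ (b - x) * f a + (x - a) * f b := by
  rcases hax.eq_or_lt with rfl | hax
  · simp
  have hab : 0 < b - a := by linarith
  have hμ : 0 ≤ (b - x) / (b - a) := div_nonneg (by linarith) hab.le
  have hν : 0 ≤ (x - a) / (b - a) := div_nonneg (by linarith) hab.le
  have hsum : (b - x) / (b - a) + (x - a) / (b - a) = 1 := by field_simp; ring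
  have hcomb : ((b - x) / (b - a)) • a + ((x - a) / (b - a)) • b = x := by
    simp only [smul_eq_mul]; field_simp; ring
  have h := hf.2 ha hb hμ hν hsum
  rw [hcomb, smul_eq_mul, smul_eq_mul] at h
  calc (b - a) * f x ≤ (b - a) * ((b - x) / (b - a) * f a + (x - a) / (b - a) * f b) := by gcongr
    _ = _ := by field_simp

/-- A term with `q i = 0`, where `p i / q i` takes the junk value `0`, forces `p i = 0` and
vanishes on both sides. -/
theorem ConvexOn.sub_mul_sum_mul_div_le_chord {ι : Type*} [Fintype ι] {s : Set ℝ} {f : ℝ → ℝ}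
    {a b : ℝ} {p q : ι → ℝ} (hf : ConvexOn ℝ s f) (ha : a ∈ s) (hb : b ∈ s)
    (hq : ∀ i, 0 ≤ q i) (hap : ∀ i, a * q i ≤ p i) (hpb : ∀ i, p i ≤ b * q i) :
    (b - a) * ∑ i, q i * f (p i / q i) ≤
      (b * ∑ i, q i - ∑ i, p i) * f a + (∑ i, p i - a * ∑ i, q i) * f b := by
  have hterm (i : ι) : (b - a) * (q i * f (p i / q i)) ≤
      (b * q i - p i) * f a + (p i - a * q i) * f b := by
    rcases (hq i).eq_or_lt with hq0 | hq0
    · have hpb := hpb i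
      have hap := hap i
      rw [← hq0, mul_zero] at hpb hap
      simp [← hq0, le_antisymm hpb hap]
    have h := hf.sub_mul_le_chord ha hb ((le_div_iff₀ hq0).2 (hap i)) ((div_le_iff₀ hq0).2 (hpb i))
    calc (b - a) * (q i * f (p i / q i)) = q i * ((b - a) * f (p i / q i)) := by ring
      _ ≤ q i * ((b - p i / q i) * f a + (p i / q i - a) * f b) := by gcongr
      _ = (b * q i - p i) * f a + (p i - a * q i) * f b := by field_simp
  calc (b - a) * ∑ i, q i * f (p i / q i) = ∑ i, (b - a) * (q i * f (p i / q i)) := mul_sum ..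
    _ ≤ ∑ i, ((b * q i - p i) * f a + (p i - a * q i) * f b) := sum_le_sum fun i _ ↦ hterm i
    _ = _ := by simp only [sum_add_distrib, ← sum_mul, sum_sub_distrib, ← mul_sum]

section Renyi

variable {ι : Type*} [Fintype ι]

noncomputable def renyiDiv (α : ℝ) (p q : ι → ℝ) : ℝ :=
  (α - 1)⁻¹ * log (∑ i, p i ^ α * q i ^ (1 - α))

theorem sum_rpow_mul_rpow_one_sub_le_exp {p q : ι → ℝ} {ε α : ℝ} (hp : ∀ i, 0 ≤ p i)
    (hq : ∀ i, 0 ≤ q i) (hp_sum : ∑ i, p i = 1) (hq_sum : ∑ i, q i = 1)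
    (hpq : ∀ i, p i ≤ exp ε * q i) (hqp : ∀ i, q i ≤ exp ε * p i) (hα : 1 < α) :
    ∑ i, p i ^ α * q i ^ (1 - α) ≤ exp (ε ^ 2 / 2 * α * (α - 1)) := by
  have hε : 0 ≤ ε := by
    refine one_le_exp_iff.1 ?_
    calc 1 = ∑ i, p i := hp_sum.symm
      _ ≤ ∑ i, exp ε * q i := sum_le_sum fun i _ ↦ hpq i
      _ = exp ε := by rw [← mul_sum, hq_sum, mul_one]
  have hqp' (i : ι) : exp (-ε) * q i ≤ p i := by
    rw [exp_neg, inv_mul_le_iff₀ (exp_pos ε)]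
    exact hqp i
  rcases hε.eq_or_lt with rfl | hε
  · have hpq_eq (i : ι) : p i = q i := le_antisymm (by simpa using hpq i) (by simpa using hqp i)
    calc ∑ i, p i ^ α * q i ^ (1 - α) = ∑ i, p i := sum_congr rfl fun i _ ↦ by
          rw [← hpq_eq, ← rpow_add' (hp i) (by norm_num), add_sub_cancel, rpow_one]
      _ ≤ exp (0 ^ 2 / 2 * α * (α - 1)) := by simp [hp_sum]
  have hchord := (convexOn_rpow hα.le).sub_mul_sum_mul_div_le_chord
    (a := exp (-ε)) (b := exp ε) (exp_pos _).le (exp_pos _).le hq hqp' hpq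
  rw [hp_sum, hq_sum, mul_one, mul_one] at hchord
  rw [sum_congr rfl fun i _ ↦ rpow_mul_rpow_one_sub (hp i) (hq i) hα.ne']
  exact le_of_mul_le_mul_left (hchord.trans (chord_rpow_exp_le hε.le hα.le))
    (sub_pos.2 (exp_lt_exp.2 (by linarith)))

theorem renyiDiv_le_of_forall_le_exp_mul {p q : ι → ℝ} {ε α : ℝ} (hp : ∀ i, 0 ≤ p i)
    (hq : ∀ i, 0 ≤ q i) (hp_sum : ∑ i, p i = 1) (hq_sum : ∑ i, q i = 1)
    (hpq : ∀ i, p i ≤ exp ε * q i) (hqp : ∀ i, q i ≤ exp ε * p i) (hα : 1 < α) :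
    renyiDiv α p q ≤ ε ^ 2 / 2 * α := by
  have hS := sum_rpow_mul_rpow_one_sub_le_exp hp hq hp_sum hq_sum hpq hqp hα
  have hS0 : 0 ≤ ∑ i, p i ^ α * q i ^ (1 - α) :=
    sum_nonneg fun i _ ↦ mul_nonneg (rpow_nonneg (hp i) _) (rpow_nonneg (hq i) _)
  rw [renyiDiv, inv_mul_le_iff₀ (sub_pos.2 hα)]
  rcases hS0.eq_or_lt with hS0 | hS0
  · rw [← hS0, log_zero]
    exact mul_nonneg (sub_pos.2 hα).le (by positivity)
  · rw [log_le_iff_le_exp hS0]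
    convert hS using 2
    ring

end Renyi

theorem pureDP_implies_zCDP_general
    {X R : Type*} [Fintype R]
    (n : ℕ) (ε : ℝ)
    (M : (Fin n → X) → R → ℝ)
    (hM0 : ∀ D r, 0 ≤ M D r) (hM1 : ∀ D, ∑ r, M D r = 1)
    -- pure `ε`-differential privacy
    (hDP : ∀ D D' : Fin n → X, (∃ i, ∀ j, j ≠ i → D j = D' j) →
      ∀ r, M D r ≤ Real.exp ε * M D' r) :
    -- `(ε²/2)`-zCDP
    ∀ D D' : Fin n → X, (∃ i, ∀ j, j ≠ i → D j = D' j) →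
      ∀ α : ℝ, 1 < α →
        (α - 1)⁻¹ * Real.log (∑ r, M D r ^ α * M D' r ^ (1 - α)) ≤ ε ^ 2 / 2 * α := by
  rintro D D' ⟨i, hi⟩ α hα
  exact renyiDiv_le_of_forall_le_exp_mul (hM0 D) (hM0 D') (hM1 D) (hM1 D') (hDP D D' ⟨i, hi⟩)
    (hDP D' D ⟨i, fun j hj ↦ (hi j hj).symm⟩) hα

/-- (Pure DP implies zCDP, Bun–Steinke.)
If a mechanism `M` from datasets to distributions on a finite set satisfies pure
`ε`-differential privacy, then it satisfies `(ε²/2)`-zCDP: for all neighboring datasets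
and all Rényi orders `α > 1`,
`D_α(M(D) ‖ M(D′)) = (α−1)⁻¹ log Σ_r M(D)(r)^α M(D′)(r)^{1−α} ≤ (ε²/2)·α`. -/
theorem pureDP_implies_zCDP
    {X R : Type*} [Fintype X] [Fintype R]
    (n : ℕ) (hn : 1 ≤ n) (ε : ℝ)
    (M : (Fin n → X) → R → ℝ)
    (hM0 : ∀ D r, 0 ≤ M D r) (hM1 : ∀ D, ∑ r, M D r = 1)
    -- pure `ε`-differential privacy
    (hDP : ∀ D D' : Fin n → X, (∃ i, ∀ j, j ≠ i → D j = D' j) →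
      ∀ r, M D r ≤ Real.exp ε * M D' r) :
    -- `(ε²/2)`-zCDP
    ∀ D D' : Fin n → X, (∃ i, ∀ j, j ≠ i → D j = D' j) →
      ∀ α : ℝ, 1 < α →
        (α - 1)⁻¹ * Real.log (∑ r, M D r ^ α * M D' r ^ (1 - α)) ≤ ε ^ 2 / 2 * α :=
  pureDP_implies_zCDP_general n ε M hM0 hM1 hDP
end

section
/- Let M be a mechanism from datasets D ∈ X^n (X a finite domain) to probability distributions on a finite set R, and suppose M satisfies ρ-zCDP: for all neighboring datasets D, D′ (differing in one entry) and all α > 1, D_α(M(D) ‖ M(D′)) ≤ ρα. Then for every δ ∈ (0,1), M satisfies (ρ + 2√(ρ·log(1/δ)), δ)-differential privacy: for all neighboring D, D′ and every set S ⊆ R, Pr[M(D) ∈ S] ≤ e^{ρ + 2√(ρ·log(1/δ))} · Pr[M(D′) ∈ S] + δ. -/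
/-!
Write `L = log (1 / δ)` and `ε = ρ + 2 √(ρ L)`. On the set where `P > e^ε Q`, each term of
`∑ P^α Q^(1-α)` is at least `e^((α-1) ε) P`, so that set has `P`-mass at most
`exp ((α - 1) (ρ α - ε))`, which is `δ` at `α = 1 + √(L / ρ)`; off that set `P ≤ e^ε Q`.
For `ρ = 0`, use the bound for every `ρ' > 0` and let `ρ' → 0`.
-/

open Real Finset Filter
open scoped ENNReal Topology

lemma mul_exp_le_rpow_mul_rpow {p q ε α : ℝ} (hq : 0 < q) (hpq : exp ε * q ≤ p) (hα : 1 ≤ α) :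
    p * exp ((α - 1) * ε) ≤ p ^ α * q ^ (1 - α) := by
  have hp : 0 < p := (mul_pos (exp_pos ε) hq).trans_le hpq
  have hratio : p ^ α * q ^ (1 - α) = p * (p / q) ^ (α - 1) := by
    rw [div_rpow hp.le hq.le, rpow_sub_one hp.ne', show 1 - α = -(α - 1) by ring,
      rpow_neg hq.le]
    field_simp
  rw [hratio, mul_comm (α - 1), exp_mul]
  gcongr
  exact (le_div_iff₀ hq).mpr hpq

lemma ofReal_mul_exp_le_rpow_mul_rpow {p q ε α : ℝ} (hq : 0 ≤ q) (hpq : exp ε * q < p)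
    (hα : 1 < α) :
    ENNReal.ofReal p * ENNReal.ofReal (exp ((α - 1) * ε)) ≤
      ENNReal.ofReal p ^ α * ENNReal.ofReal q ^ (1 - α) := by
  have hp : 0 < p := (mul_nonneg (exp_pos ε).le hq).trans_lt hpq
  rcases hq.eq_or_lt with rfl | hq
  · rw [ENNReal.ofReal_zero, ENNReal.zero_rpow_of_neg (by linarith),
      ENNReal.mul_top (ENNReal.rpow_pos (ENNReal.ofReal_pos.mpr hp) ENNReal.ofReal_ne_top).ne']
    exact le_top
  · rw [← ENNReal.ofReal_mul hp.le, ENNReal.ofReal_rpow_of_pos hp,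
      ENNReal.ofReal_rpow_of_pos hq, ← ENNReal.ofReal_mul (by positivity)]
    exact ENNReal.ofReal_le_ofReal (mul_exp_le_rpow_mul_rpow hq hpq.le hα.le)

section

variable {R : Type*} [Fintype R]

/-- `exp ((α - 1) D_α(P ‖ Q))`, computed in `ℝ≥0∞` so that it is `⊤` when `P` is not absolutely
continuous with respect to `Q`. -/
noncomputable def renyiMoment (P Q : R → ℝ) (α : ℝ) : ℝ≥0∞ :=
  ∑ r, ENNReal.ofReal (P r) ^ α * ENNReal.ofReal (Q r) ^ (1 - α)

def ZCDPBound (ρ : ℝ) (P Q : R → ℝ) : Prop :=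
  ∀ α, 1 < α → renyiMoment P Q α ≤ ENNReal.ofReal (exp ((α - 1) * (ρ * α)))

variable {P Q : R → ℝ}

lemma sum_filter_lt_le_of_renyiMoment_le {α B : ℝ} (ε : ℝ) (hP : ∀ r, 0 ≤ P r)
    (hQ : ∀ r, 0 ≤ Q r) (hα : 1 < α) (hB : renyiMoment P Q α ≤ ENNReal.ofReal (exp B)) :
    ∑ r with exp ε * Q r < P r, P r ≤ exp (B - (α - 1) * ε) := by
  set A := ({r | exp ε * Q r < P r} : Finset R)
  have key : ENNReal.ofReal ((∑ r ∈ A, P r) * exp ((α - 1) * ε)) ≤ ENNReal.ofReal (exp B) :=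
    calc ENNReal.ofReal ((∑ r ∈ A, P r) * exp ((α - 1) * ε))
        = ∑ r ∈ A, ENNReal.ofReal (P r) * ENNReal.ofReal (exp ((α - 1) * ε)) := by
          rw [ENNReal.ofReal_mul (sum_nonneg fun r _ => hP r),
            ENNReal.ofReal_sum_of_nonneg fun r _ => hP r, sum_mul]
      _ ≤ ∑ r ∈ A, ENNReal.ofReal (P r) ^ α * ENNReal.ofReal (Q r) ^ (1 - α) :=
          sum_le_sum fun r hr => ofReal_mul_exp_le_rpow_mul_rpow (hQ r) (mem_filter.mp hr).2 hα
      _ ≤ renyiMoment P Q α := sum_le_sum_of_subset (subset_univ A)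
      _ ≤ ENNReal.ofReal (exp B) := hB
  rw [exp_sub, le_div_iff₀ (exp_pos _)]
  exact (ENNReal.ofReal_le_ofReal_iff (exp_pos B).le).mp key

lemma sum_le_mul_sum_add_sum_filter_lt {c : ℝ} (hP : ∀ r, 0 ≤ P r) (hQ : ∀ r, 0 ≤ Q r)
    (hc : 0 ≤ c) (S : Finset R) :
    ∑ r ∈ S, P r ≤ c * ∑ r ∈ S, Q r + ∑ r with c * Q r < P r, P r := by
  rw [← sum_filter_add_sum_filter_not S (fun r => c * Q r < P r), add_comm]
  gcongr ?_ + ?_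
  · calc ∑ r ∈ S with ¬c * Q r < P r, P r
        ≤ ∑ r ∈ S with ¬c * Q r < P r, c * Q r :=
          sum_le_sum fun r hr => not_lt.mp (mem_filter.mp hr).2
      _ ≤ c * ∑ r ∈ S, Q r := by
          rw [← mul_sum]
          exact mul_le_mul_of_nonneg_left
            (sum_le_sum_of_subset_of_nonneg (filter_subset _ S) fun r _ _ => hQ r) hc
  · exact sum_le_sum_of_subset_of_nonneg (filter_subset_filter _ (subset_univ S))
      fun r _ _ => hP r

lemma sum_le_exp_mul_sum_add_exp_of_renyiMoment_le {α B : ℝ} (ε : ℝ) (hP : ∀ r, 0 ≤ P r)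
    (hQ : ∀ r, 0 ≤ Q r) (hα : 1 < α) (hB : renyiMoment P Q α ≤ ENNReal.ofReal (exp B))
    (S : Finset R) :
    ∑ r ∈ S, P r ≤ exp ε * ∑ r ∈ S, Q r + exp (B - (α - 1) * ε) :=
  (sum_le_mul_sum_add_sum_filter_lt hP hQ (exp_pos ε).le S).trans
    (add_le_add_right (sum_filter_lt_le_of_renyiMoment_le ε hP hQ hα hB) _)

namespace ZCDPBound

variable {ρ L : ℝ}

lemma mono {ρ' : ℝ} (h : ZCDPBound ρ P Q) (hρ : ρ ≤ ρ') : ZCDPBound ρ' P Q := fun α hα =>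
  (h α hα).trans <| ENNReal.ofReal_le_ofReal <| exp_le_exp.mpr <|
    mul_le_mul_of_nonneg_left (mul_le_mul_of_nonneg_right hρ (by linarith)) (by linarith)

lemma sum_le_of_pos (h : ZCDPBound ρ P Q) (hP : ∀ r, 0 ≤ P r) (hQ : ∀ r, 0 ≤ Q r)
    (hρ : 0 < ρ) (hL : 0 < L) (S : Finset R) :
    ∑ r ∈ S, P r ≤ exp (ρ + 2 * √(ρ * L)) * ∑ r ∈ S, Q r + exp (-L) := by
  -- `α = 1 + s` minimises `(α - 1) (ρ α - ε)`; `ε = ρ + 2 √(ρ L)` makes the minimum `-L`.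
  set s := √(L / ρ)
  have hs : 0 < s := sqrt_pos.mpr (div_pos hL hρ)
  have hρs : ρ * (s * s) = L := by
    rw [mul_self_sqrt (div_pos hL hρ).le]
    field_simp
  have hsqrt : √(ρ * L) = ρ * s := by
    rw [← hρs, show ρ * (ρ * (s * s)) = ρ * s * (ρ * s) by ring, sqrt_mul_self (by positivity)]
  have hexponent : (1 + s - 1) * (ρ * (1 + s)) - (1 + s - 1) * (ρ + 2 * √(ρ * L)) = -L := by
    rw [hsqrt, ← hρs]
    ring
  have hα : 1 < 1 + s := by linarith
  simpa only [hexponent] using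
    sum_le_exp_mul_sum_add_exp_of_renyiMoment_le (ρ + 2 * √(ρ * L)) hP hQ hα (h _ hα) S

lemma sum_le (h : ZCDPBound ρ P Q) (hP : ∀ r, 0 ≤ P r) (hQ : ∀ r, 0 ≤ Q r)
    (hρ : 0 ≤ ρ) (hL : 0 < L) (S : Finset R) :
    ∑ r ∈ S, P r ≤ exp (ρ + 2 * √(ρ * L)) * ∑ r ∈ S, Q r + exp (-L) := by
  rcases hρ.eq_or_lt with rfl | hρ
  · have hcont : Continuous fun ρ' => exp (ρ' + 2 * √(ρ' * L)) * ∑ r ∈ S, Q r + exp (-L) := by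
      fun_prop
    refine ge_of_tendsto (x := 𝓝[>] 0) (hcont.tendsto 0 |>.mono_left nhdsWithin_le_nhds) ?_
    filter_upwards [self_mem_nhdsWithin] with ρ' hρ'
    exact (h.mono hρ'.le).sum_le_of_pos hP hQ hρ' hL S
  · exact h.sum_le_of_pos hP hQ hρ hL S

end ZCDPBound

end

theorem zCDP_implies_approxDP_general
    {X R : Type*} [Fintype R]
    (n : ℕ) (ρ : ℝ) (hρ : 0 ≤ ρ) (δ : ℝ) (hδ : δ ∈ Set.Ioo (0 : ℝ) 1)
    (M : (Fin n → X) → R → ℝ)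
    (hM0 : ∀ D r, 0 ≤ M D r)
    -- `ρ`-zCDP: `D_α(M(D) ‖ M(D′)) ≤ ρ·α` for all neighboring `D, D′` and all `α > 1`
    (hzCDP : ∀ D D' : Fin n → X, (∃ i, ∀ j, j ≠ i → D j = D' j) →
      ∀ α : ℝ, 1 < α →
        ∑ r, ENNReal.ofReal (M D r) ^ α * ENNReal.ofReal (M D' r) ^ (1 - α) ≤
          ENNReal.ofReal (Real.exp ((α - 1) * (ρ * α)))) :
    -- `(ρ + 2√(ρ·log(1/δ)), δ)`-differential privacy
    ∀ D D' : Fin n → X, (∃ i, ∀ j, j ≠ i → D j = D' j) →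
      ∀ S : Finset R,
        ∑ r ∈ S, M D r ≤
          Real.exp (ρ + 2 * Real.sqrt (ρ * Real.log (1 / δ))) * ∑ r ∈ S, M D' r + δ := by
  intro D D' hneighbor S
  have hL : 0 < log (1 / δ) := log_pos (one_lt_one_div hδ.1 hδ.2)
  have hδ_eq : exp (-log (1 / δ)) = δ := by rw [one_div, log_inv, neg_neg, exp_log hδ.1]
  have hbound : ZCDPBound ρ (M D) (M D') := hzCDP D D' hneighbor
  simpa only [hδ_eq] using hbound.sum_le (hM0 D) (hM0 D') hρ hL S

/-- (zCDP implies approximate DP, Bun–Steinke.)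
If `M` satisfies `ρ`-zCDP — i.e. for all neighboring datasets and all `α > 1`,
`D_α(M(D) ‖ M(D′)) ≤ ρα`, encoded as
`Σ_r M(D)(r)^α · M(D′)(r)^{1−α} ≤ exp((α−1)·ρα)` with the sum computed in `ℝ≥0∞`
(so that the divergence is infinite when absolute continuity fails) —
then for every `δ ∈ (0,1)`, `M` is `(ρ + 2√(ρ·log(1/δ)), δ)`-differentially private. -/
theorem zCDP_implies_approxDP
    {X R : Type*} [Fintype X] [Fintype R]
    (n : ℕ) (hn : 1 ≤ n) (ρ : ℝ) (hρ : 0 ≤ ρ) (δ : ℝ) (hδ : δ ∈ Set.Ioo (0 : ℝ) 1)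
    (M : (Fin n → X) → R → ℝ)
    (hM0 : ∀ D r, 0 ≤ M D r) (hM1 : ∀ D, ∑ r, M D r = 1)
    -- `ρ`-zCDP: `D_α(M(D) ‖ M(D′)) ≤ ρ·α` for all neighboring `D, D′` and all `α > 1`
    (hzCDP : ∀ D D' : Fin n → X, (∃ i, ∀ j, j ≠ i → D j = D' j) →
      ∀ α : ℝ, 1 < α →
        ∑ r, ENNReal.ofReal (M D r) ^ α * ENNReal.ofReal (M D' r) ^ (1 - α) ≤
          ENNReal.ofReal (Real.exp ((α - 1) * (ρ * α)))) :
    -- `(ρ + 2√(ρ·log(1/δ)), δ)`-differential privacy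
    ∀ D D' : Fin n → X, (∃ i, ∀ j, j ≠ i → D j = D' j) →
      ∀ S : Finset R,
        ∑ r ∈ S, M D r ≤
          Real.exp (ρ + 2 * Real.sqrt (ρ * Real.log (1 / δ))) * ∑ r ∈ S, M D' r + δ :=
  zCDP_implies_approxDP_general n ρ hρ δ hδ M hM0 hzCDP
end
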